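/- For every simple regular expression E₁ over an alphabet α, the number of distinct sets ∂_w(E₁*) for w ranging over nonempty words over α is at most 2 raised to the number of distinct sets ∂_w(E₁) for w ranging over nonempty words over α. -/

import Mathlib

open scoped Classical

/-- The Antimirov partial derivative of a regular expression with respect to a symbol. -/
noncomputable def aderiv {α : Type*} (a : α) : RegularExpression α → Set (RegularExpression α)
  | .zero => ∅
  | .epsilon => ∅
  | .char b => if b = a then {1} else ∅
  | .plus E₁ E₂ => aderiv a E₁ ∪ aderiv a E₂
  | .comp E₁ E₂ =>
      if [] ∈ E₁.matches' then ((· * E₂) '' aderiv a E₁) ∪ aderiv a E₂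
      else (· * E₂) '' aderiv a E₁
  | .star E₁ => (· * E₁.star) '' aderiv a E₁

/-- Iterated Antimirov partial derivative with respect to a word. -/
noncomputable def aderivWord {α : Type*} : List α → RegularExpression α → Set (RegularExpression α)
  | [], E => {E}
  | a :: w, E => ⋃ F ∈ aderiv a E, aderivWord w F

/-- Left quotient of a language by a word. -/
def lquot {α : Type*} (w : List α) (L : Language α) : Language α := {v | w ++ v ∈ L}

/-!
Every partial derivative of `E₁` by a nonempty word lies in Antimirov's finite set `π(E₁)`, so
there are finitely many such sets, say `D` of them. Reading a nonempty word letter by letter,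
`∂_{aw}(E₁*)` always has the form `{F · E₁* | F ∈ ⋃ U}` for a family `U` of partial derivative
sets of `E₁` by nonempty words: a letter `b` differentiates every member of the family, and
adds `∂_b(E₁)` when some member is nullable. Hence `∂_{aw}(E₁*)` is determined by a subset of
these `D` sets.
-/

section

variable {α : Type*}

/-- Antimirov's `π(E)`. -/
def pdPlus : RegularExpression α → Set (RegularExpression α)
  | .zero => ∅
  | .epsilon => ∅
  | .char _ => {1}
  | .plus E₁ E₂ => pdPlus E₁ ∪ pdPlus E₂
  | .comp E₁ E₂ => ((· * E₂) '' pdPlus E₁) ∪ pdPlus E₂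
  | .star E₁ => (· * E₁.star) '' pdPlus E₁

theorem pdPlus_finite (E : RegularExpression α) : (pdPlus E).Finite := by
  induction E with
  | zero => exact Set.finite_empty
  | epsilon => exact Set.finite_empty
  | char _ => exact Set.finite_singleton _
  | plus E₁ E₂ ih₁ ih₂ => exact ih₁.union ih₂
  | comp E₁ E₂ ih₁ ih₂ => exact (ih₁.image _).union ih₂
  | star E₁ ih => exact ih.image _

theorem aderiv_subset_pdPlus (a : α) (E : RegularExpression α) : aderiv a E ⊆ pdPlus E := by
  induction E with
  | zero => exact subset_rfl
  | epsilon => exact subset_rfl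
  | char b =>
    simp only [aderiv, pdPlus]
    split <;> simp
  | plus E₁ E₂ ih₁ ih₂ => exact Set.union_subset_union ih₁ ih₂
  | comp E₁ E₂ ih₁ ih₂ =>
    simp only [aderiv, pdPlus]
    split
    · exact Set.union_subset_union (Set.image_mono ih₁) ih₂
    · exact (Set.image_mono ih₁).trans Set.subset_union_left
  | star E₁ ih => exact Set.image_mono ih

theorem aderiv_subset_pdPlus_of_mem (a : α) {E G : RegularExpression α} (hG : G ∈ pdPlus E) :
    aderiv a G ⊆ pdPlus E := by
  induction E generalizing G with
  | zero => simp [pdPlus] at hG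
  | epsilon => simp [pdPlus] at hG
  | char b =>
    rw [pdPlus, Set.mem_singleton_iff] at hG
    subst hG
    simp [aderiv]
  | plus E₁ E₂ ih₁ ih₂ =>
    rcases hG with hG | hG
    · exact (ih₁ hG).trans Set.subset_union_left
    · exact (ih₂ hG).trans Set.subset_union_right
  | comp E₁ E₂ ih₁ ih₂ =>
    rcases hG with ⟨H, hH, rfl⟩ | hG
    · change aderiv a (H.comp E₂) ⊆ _
      simp only [aderiv]
      split
      · exact Set.union_subset_union (Set.image_mono (ih₁ hH)) (aderiv_subset_pdPlus a E₂)
      · exact (Set.image_mono (ih₁ hH)).trans Set.subset_union_left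
    · exact (ih₂ hG).trans Set.subset_union_right
  | star E₁ ih =>
    obtain ⟨H, hH, rfl⟩ := hG
    change aderiv a (H.comp E₁.star) ⊆ _
    simp only [aderiv]
    split
    · exact Set.union_subset (Set.image_mono (ih hH))
        (Set.image_mono (aderiv_subset_pdPlus a E₁))
    · exact Set.image_mono (ih hH)

theorem aderivWord_subset_pdPlus_of_mem (w : List α) {E G : RegularExpression α}
    (hG : G ∈ pdPlus E) : aderivWord w G ⊆ pdPlus E := by
  induction w generalizing G with
  | nil => simpa [aderivWord] using hG
  | cons b w ih =>
    exact Set.iUnion₂_subset fun F hF => ih (aderiv_subset_pdPlus_of_mem b hG hF)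

theorem aderivWord_cons_subset_pdPlus (a : α) (w : List α) (E : RegularExpression α) :
    aderivWord (a :: w) E ⊆ pdPlus E :=
  Set.iUnion₂_subset fun _ hF => aderivWord_subset_pdPlus_of_mem w (aderiv_subset_pdPlus a E hF)

@[simp]
theorem aderivWord_singleton (a : α) (E : RegularExpression α) :
    aderivWord [a] E = aderiv a E := by
  simp [aderivWord]

theorem aderivWord_append_singleton (w : List α) (b : α) (E : RegularExpression α) :
    aderivWord (w ++ [b]) E = ⋃ G ∈ aderivWord w E, aderiv b G := by
  induction w generalizing E with
  | nil => simp [aderivWord]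
  | cons a w ih =>
    simp only [List.cons_append, aderivWord, ih, Set.biUnion_iUnion]

theorem aderiv_mul_star (b : α) (G E : RegularExpression α) :
    aderiv b (G * E.star) =
      (· * E.star) '' (aderiv b G ∪ {F | F ∈ aderiv b E ∧ [] ∈ G.matches'}) := by
  change aderiv b (G.comp E.star) = _
  by_cases h : [] ∈ G.matches' <;> simp [aderiv, h, Set.image_union]

def aderivSets (E : RegularExpression α) : Set (Set (RegularExpression α)) :=
  {S | ∃ (a : α) (w : List α), S = aderivWord (a :: w) E}

theorem aderivSets_finite (E : RegularExpression α) : (aderivSets E).Finite :=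
  (pdPlus_finite E).finite_subsets.subset <| by
    rintro _ ⟨a, w, rfl⟩
    exact aderivWord_cons_subset_pdPlus a w E

theorem aderivWord_cons_star (E : RegularExpression α) (a : α) (w : List α) :
    ∃ U ⊆ aderivSets E, aderivWord (a :: w) E.star = (· * E.star) '' ⋃₀ U := by
  induction w using List.reverseRecOn with
  | nil =>
    refine ⟨{aderiv a E}, ?_, by simp [aderiv]⟩
    simpa using ⟨a, [], (aderivWord_singleton a E).symm⟩
  | append_singleton v b ih =>
    obtain ⟨U, hU, hstar⟩ := ih
    refine ⟨(fun T => ⋃ G ∈ T, aderiv b G) '' U ∪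
      {S | S = aderiv b E ∧ ∃ G ∈ ⋃₀ U, [] ∈ G.matches'}, ?_, ?_⟩
    · rintro _ (⟨T, hT, rfl⟩ | ⟨rfl, -⟩)
      · obtain ⟨c, u, rfl⟩ := hU hT
        exact ⟨c, u ++ [b], by rw [← List.cons_append, aderivWord_append_singleton]⟩
      · exact ⟨b, [], (aderivWord_singleton b E).symm⟩
    · rw [← List.cons_append, aderivWord_append_singleton, hstar, Set.biUnion_image]
      simp only [aderiv_mul_star, ← Set.image_iUnion₂]
      congr 1
      ext F
      simp only [Set.mem_iUnion, Set.mem_union, Set.mem_ofPred_eq, Set.mem_sUnion,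
        Set.sUnion_union, Set.sUnion_image, exists_prop]
      grind

theorem aderivSets_star_subset (E : RegularExpression α) :
    aderivSets E.star ⊆ (fun U => (· * E.star) '' ⋃₀ U) '' 𝒫 aderivSets E := by
  rintro _ ⟨a, w, rfl⟩
  obtain ⟨U, hU, h⟩ := aderivWord_cons_star E a w
  exact ⟨U, hU, h.symm⟩

end

theorem antimirov_star_card {α : Type*} (E₁ : RegularExpression α) :
    {S | ∃ (a : α) (w : List α), S = aderivWord (a :: w) E₁.star}.ncard ≤
      2 ^ {S | ∃ (a : α) (w : List α), S = aderivWord (a :: w) E₁}.ncard := by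
  change (aderivSets E₁.star).ncard ≤ 2 ^ (aderivSets E₁).ncard
  have hfin := (aderivSets_finite E₁).powerset
  calc (aderivSets E₁.star).ncard
      ≤ ((fun U => (· * E₁.star) '' ⋃₀ U) '' 𝒫 aderivSets E₁).ncard :=
        Set.ncard_le_ncard (aderivSets_star_subset E₁) (hfin.image _)
    _ ≤ (𝒫 aderivSets E₁).ncard := Set.ncard_image_le hfin
    _ = 2 ^ (aderivSets E₁).ncard := Set.ncard_powerset _ (aderivSets_finite E₁)
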